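/- arXiv:1210.3932 — 2 statements merged into one kernel-verified Lean document; each statement's English description precedes it below -/
import Mathlib

section
/- If g : [a,b] → ℝ has finite total variation, |{g(s) − g(u)} − {f(s) − f(u)}| ≤ c for all a ≤ u < s ≤ b, and g = g(a) + g_U − g_D with g_U, g_D : [a,b] → [0,∞) non-decreasing, then g_U(s) ≥ UTV^c(f,[a,s]) and g_D(s) ≥ DTV^c(f,[a,s]) for every s ∈ [a,b]. -/
open Set Filter

/-- A finite partition `t 0 < t 1 < ... < t n` of points in `[a, b]`. -/
def IsPart (a b : ℝ) (n : ℕ) (t : ℕ → ℝ) : Prop :=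
  a ≤ t 0 ∧ t n ≤ b ∧ ∀ i < n, t i < t (i + 1)

/-- Total variation of `f` on `[a, b]`. -/
noncomputable def TVar {E : Type*} [PseudoMetricSpace E] (f : ℝ → E) (a b : ℝ) : ENNReal :=
  ⨆ (n : ℕ) (t : ℕ → ℝ) (_ : IsPart a b n t),
    ∑ i ∈ Finset.range n, ENNReal.ofReal (dist (f (t (i + 1))) (f (t i)))

/-- Truncated variation of `f` at level `c` on `[a, b]`. -/
noncomputable def TVc {E : Type*} [PseudoMetricSpace E] (f : ℝ → E) (c a b : ℝ) : ENNReal :=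
  ⨆ (n : ℕ) (t : ℕ → ℝ) (_ : IsPart a b n t),
    ∑ i ∈ Finset.range n, ENNReal.ofReal (dist (f (t (i + 1))) (f (t i)) - c)

/-- Upward truncated variation. -/
noncomputable def UTVc (f : ℝ → ℝ) (c a b : ℝ) : ENNReal :=
  ⨆ (n : ℕ) (t : ℕ → ℝ) (_ : IsPart a b n t),
    ∑ i ∈ Finset.range n, ENNReal.ofReal (f (t (i + 1)) - f (t i) - c)

/-- Downward truncated variation. -/
noncomputable def DTVc (f : ℝ → ℝ) (c a b : ℝ) : ENNReal :=
  ⨆ (n : ℕ) (t : ℕ → ℝ) (_ : IsPart a b n t),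
    ∑ i ∈ Finset.range n, ENNReal.ofReal (f (t i) - f (t (i + 1)) - c)

/-- `f` is càdlàg on `[a, b]`: right-continuous on `[a, b)`, with left limits on `(a, b]`. -/
def Cadlag {E : Type*} [TopologicalSpace E] (f : ℝ → E) (a b : ℝ) : Prop :=
  (∀ t ∈ Set.Ico a b, Tendsto f (nhdsWithin t (Set.Ioi t)) (nhds (f t))) ∧
  (∀ t ∈ Set.Ioc a b, ∃ l, Tendsto f (nhdsWithin t (Set.Iio t)) (nhds l))

/-!
The increments of `g` match those of `f` up to `c`, so on every interval `[u, v]` the upward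
excess `f v - f u - c` is at most `g v - g u = (gU v - gU u) - (gD v - gD u) ≤ gU v - gU u`.
Summing over a partition telescopes to `gU (t n) - gU (t 0) ≤ gU s`, because `gU` is monotone and
nonnegative; symmetrically for the downward excess and `gD`.
-/

namespace IsPart

variable {a b : ℝ} {n : ℕ} {t : ℕ → ℝ}

theorem strictMonoOn (hp : IsPart a b n t) : StrictMonoOn t (Iic n) :=
  strictMonoOn_Iic_of_lt_succ hp.2.2

theorem mem_Icc (hp : IsPart a b n t) {i : ℕ} (hi : i ≤ n) : t i ∈ Icc a b :=
  ⟨hp.1.trans (hp.strictMonoOn.monotoneOn (mem_Iic.2 n.zero_le) hi i.zero_le),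
    (hp.strictMonoOn.monotoneOn hi (mem_Iic.2 le_rfl) hi).trans hp.2.1⟩

end IsPart

theorem iSup_isPart_sum_le_of_le_sub {a s : ℝ} (F : ℝ → ℝ → ℝ) {φ : ℝ → ℝ}
    (hφ : MonotoneOn φ (Icc a s)) (hφ0 : ∀ t ∈ Icc a s, 0 ≤ φ t)
    (hF : ∀ u ∈ Icc a s, ∀ v ∈ Icc a s, u < v → F u v ≤ φ v - φ u) :
    ⨆ (n : ℕ) (t : ℕ → ℝ) (_ : IsPart a s n t),
        ∑ i ∈ Finset.range n, ENNReal.ofReal (F (t i) (t (i + 1))) ≤ ENNReal.ofReal (φ s) := by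
  refine iSup_le fun n => iSup_le fun t => iSup_le fun hp => ?_
  have hmem {i : ℕ} (hi : i ≤ n) : t i ∈ Icc a s := hp.mem_Icc hi
  have hstep {i : ℕ} (hi : i < n) : t i < t (i + 1) := hp.2.2 i hi
  have hs : s ∈ Icc a s := ⟨(hmem n.zero_le).1.trans (hmem n.zero_le).2, le_rfl⟩
  calc ∑ i ∈ Finset.range n, ENNReal.ofReal (F (t i) (t (i + 1)))
      ≤ ∑ i ∈ Finset.range n, ENNReal.ofReal (φ (t (i + 1)) - φ (t i)) := by
        gcongr with i hi
        have hi := Finset.mem_range.mp hi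
        exact hF _ (hmem hi.le) _ (hmem hi) (hstep hi)
    _ = ENNReal.ofReal (∑ i ∈ Finset.range n, (φ (t (i + 1)) - φ (t i))) := by
        refine (ENNReal.ofReal_sum_of_nonneg fun i hi => ?_).symm
        have hi := Finset.mem_range.mp hi
        exact sub_nonneg.mpr (hφ (hmem hi.le) (hmem hi) (hstep hi).le)
    _ = ENNReal.ofReal (φ (t n) - φ (t 0)) := by rw [Finset.sum_range_sub (fun i => φ (t i))]
    _ ≤ ENNReal.ofReal (φ s) := by
        gcongr
        linarith [hφ (hmem le_rfl) hs hp.2.1, hφ0 _ (hmem n.zero_le)]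

theorem jordan_dominates_general (a b : ℝ) (f : ℝ → ℝ)
    (c : ℝ)
    (g gU gD : ℝ → ℝ)
    (hincr : ∀ u ∈ Set.Icc a b, ∀ s ∈ Set.Icc a b, u < s →
      |(g s - g u) - (f s - f u)| ≤ c)
    (hU : MonotoneOn gU (Set.Icc a b)) (hD : MonotoneOn gD (Set.Icc a b))
    (hU0 : ∀ t ∈ Set.Icc a b, 0 ≤ gU t) (hD0 : ∀ t ∈ Set.Icc a b, 0 ≤ gD t)
    (hdec : ∀ t ∈ Set.Icc a b, g t = g a + gU t - gD t) :
    ∀ s ∈ Set.Icc a b,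
      UTVc f c a s ≤ ENNReal.ofReal (gU s) ∧ DTVc f c a s ≤ ENNReal.ofReal (gD s) := by
  intro s hs
  have hsub : Icc a s ⊆ Icc a b := Icc_subset_Icc le_rfl hs.2
  have hincr_le {u v : ℝ} (hu : u ∈ Icc a s) (hv : v ∈ Icc a s) (huv : u < v) :
      |(gU v - gU u) - (gD v - gD u) - (f v - f u)| ≤ c := by
    have := hincr u (hsub hu) v (hsub hv) huv
    rw [hdec u (hsub hu), hdec v (hsub hv)] at this
    convert this using 2
    ring
  constructor
  · refine iSup_isPart_sum_le_of_le_sub (fun u v => f v - f u - c) (hU.mono hsub)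
      (fun t ht => hU0 t (hsub ht)) fun u hu v hv huv => ?_
    linarith [(abs_le.mp (hincr_le hu hv huv)).1, hD (hsub hu) (hsub hv) huv.le]
  · refine iSup_isPart_sum_le_of_le_sub (fun u v => f u - f v - c) (hD.mono hsub)
      (fun t ht => hD0 t (hsub ht)) fun u hu v hv huv => ?_
    linarith [(abs_le.mp (hincr_le hu hv huv)).2, hU (hsub hu) (hsub hv) huv.le]

/-- Any Jordan-type decomposition `g = g(a) + g_U − g_D` of a function `g`
whose increments approximate those of `f` with accuracy `c` dominates
`UTV^c` and `DTV^c`. -/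
theorem jordan_dominates (a b : ℝ) (hab : a < b) (f : ℝ → ℝ)
    (hf : Cadlag f a b) (c : ℝ) (hc : 0 < c)
    (g gU gD : ℝ → ℝ)
    (hgTV : TVar g a b < ⊤)
    (hincr : ∀ u ∈ Set.Icc a b, ∀ s ∈ Set.Icc a b, u < s →
      |(g s - g u) - (f s - f u)| ≤ c)
    (hU : MonotoneOn gU (Set.Icc a b)) (hD : MonotoneOn gD (Set.Icc a b))
    (hU0 : ∀ t ∈ Set.Icc a b, 0 ≤ gU t) (hD0 : ∀ t ∈ Set.Icc a b, 0 ≤ gD t)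
    (hdec : ∀ t ∈ Set.Icc a b, g t = g a + gU t - gD t) :
    ∀ s ∈ Set.Icc a b,
      UTVc f c a s ≤ ENNReal.ofReal (gU s) ∧ DTVc f c a s ≤ ENNReal.ofReal (gD s) :=
  jordan_dominates_general a b f c g gU gD hincr hU hD hU0 hD0 hdec
end

section
/- For any càdlàg function f : [a,b] → ℝ, the map c ↦ UTV^c(f,[a,b]) on (0,∞) is non-increasing and convex (hence continuous). -/
open Set Filter

/-!
Each partition contributes a function `c ↦ ∑ (f tᵢ₊₁ - f tᵢ - c)⁺` that is non-increasing and
convex, and both properties pass to the supremum; convexity on an open interval gives continuity.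
The work is in finiteness for `c > 0`, without which `toReal` would break both properties. A càdlàg
`f` splits `[a, b]` into finitely many consecutive cells on each of which it oscillates by at most
`c`.
-/

open Topology
open scoped Finset

/-- `g x` is the index of the cell containing `x`; monotonicity of `g` makes the cells consecutive
pieces of `s`. -/
def HasOscCells {E : Type*} [PseudoMetricSpace E] (f : ℝ → E) (ε : ℝ) (s : Set ℝ) : Prop :=
  ∃ (k : ℕ) (g : ℝ → ℕ), MonotoneOn g s ∧ (∀ x ∈ s, g x < k) ∧
    ∀ x ∈ s, ∀ y ∈ s, g x = g y → dist (f x) (f y) ≤ ε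

namespace HasOscCells

variable {E : Type*} [PseudoMetricSpace E] {f : ℝ → E} {ε : ℝ} {s t : Set ℝ}

lemma empty : HasOscCells f ε ∅ :=
  ⟨0, fun _ => 0, fun _ h => h.elim, fun _ h => h.elim, fun _ h => h.elim⟩

lemma mono (h : HasOscCells f ε t) (hst : s ⊆ t) : HasOscCells f ε s := by
  obtain ⟨k, g, hmono, hlt, hosc⟩ := h
  exact ⟨k, g, hmono.mono hst, fun x hx => hlt x (hst hx),
    fun x hx y hy => hosc x (hst hx) y (hst hy)⟩

/-- The points of `t` get a new label, larger than all the old ones. -/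
lemma union (hs : HasOscCells f ε s) (ht : ∀ x ∈ t, ∀ y ∈ t, dist (f x) (f y) ≤ ε)
    (hst : ∀ x ∈ s, ∀ y ∈ t, x < y) : HasOscCells f ε (s ∪ t) := by
  classical
  obtain ⟨k, g, hmono, hlt, hosc⟩ := hs
  have hdisj : ∀ y ∈ t, y ∉ s := fun y hy hys => (hst y hys y hy).false
  refine ⟨k + 1, fun x => if x ∈ s then g x else k, ?_, ?_, ?_⟩
  · rintro x (hx | hx) y (hy | hy) hxy
    · simpa [hx, hy] using hmono hx hy hxy
    · simpa [hx, hdisj y hy] using (hlt x hx).le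
    · exact absurd hxy (not_le.2 (hst y hy x hx))
    · simp [hdisj x hx, hdisj y hy]
  · rintro x (hx | hx)
    · simpa [hx] using (hlt x hx).trans (Nat.lt_succ_self k)
    · simp [hdisj x hx]
  · rintro x (hx | hx) y (hy | hy) hxy
    · exact hosc x hx y hy (by simpa [hx, hy] using hxy)
    · simp only [hx, hdisj y hy, if_true, if_false] at hxy
      exact absurd hxy (hlt x hx).ne
    · simp only [hy, hdisj x hx, if_true, if_false] at hxy
      exact absurd hxy.symm (hlt y hy).ne
    · exact ht x hx y hy

lemma isBounded_image (h : HasOscCells f ε s) : Bornology.IsBounded (f '' s) := by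
  obtain ⟨k, g, -, hlt, hosc⟩ := h
  have hcover : f '' s ⊆ ⋃ j ∈ Iio k, f '' (s ∩ g ⁻¹' {j}) := by
    rintro _ ⟨x, hx, rfl⟩
    exact mem_biUnion (hlt x hx) ⟨x, ⟨hx, rfl⟩, rfl⟩
  refine ((Bornology.isBounded_biUnion (finite_Iio k)).2 fun j _ => ?_).subset hcover
  refine Metric.isBounded_iff.2 ⟨ε, ?_⟩
  rintro _ ⟨x, ⟨hx, hxj⟩, rfl⟩ _ ⟨y, ⟨hy, hyj⟩, rfl⟩
  exact hosc x hx y hy (hxj.trans hyj.symm)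

end HasOscCells

lemma exists_dist_le_of_tendsto_nhdsWithin {E : Type*} [PseudoMetricSpace E] {f : ℝ → E}
    {s : Set ℝ} {x : ℝ} {l : E} (h : Tendsto f (𝓝[s] x) (𝓝 l)) {ε : ℝ} (hε : 0 < ε) :
    ∃ δ > 0, ∀ u ∈ s ∩ Ioo (x - δ) (x + δ), ∀ v ∈ s ∩ Ioo (x - δ) (x + δ),
      dist (f u) (f v) ≤ ε := by
  obtain ⟨δ, hδ, hl⟩ := Metric.tendsto_nhdsWithin_nhds.1 h (ε / 2) (half_pos hε)
  have hball : ∀ u ∈ s ∩ Ioo (x - δ) (x + δ), dist (f u) l < ε / 2 := fun u hu =>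
    hl hu.1 (by rw [Real.dist_eq, abs_sub_lt_iff]; constructor <;> linarith [hu.2.1, hu.2.2])
  refine ⟨δ, hδ, fun u hu v hv => (dist_triangle_right _ _ l).trans ?_⟩
  linarith [hball u hu, hball v hv]

namespace Cadlag

variable {E : Type*} [PseudoMetricSpace E] {f : ℝ → E} {a b ε : ℝ}

/-- The supremum `m` of the points `x` for which `[a, x)` is covered is covered itself thanks to
the left limit at `m`, and equals `b` thanks to right continuity at `m`. -/
lemma hasOscCells_Ico (hf : Cadlag f a b) (hab : a ≤ b) (hε : 0 < ε) :
    HasOscCells f ε (Ico a b) := by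
  set A := {x | x ∈ Icc a b ∧ HasOscCells f ε (Ico a x)}
  have haA : a ∈ A := ⟨⟨le_rfl, hab⟩, by simpa using HasOscCells.empty⟩
  have hbdd : BddAbove A := ⟨b, fun x hx => hx.1.2⟩
  set m := sSup A
  have ham : a ≤ m := le_csSup hbdd haA
  have hmb : m ≤ b := csSup_le ⟨a, haA⟩ fun x hx => hx.1.2
  have hm : HasOscCells f ε (Ico a m) := by
    rcases ham.eq_or_lt with ham | ham
    · simpa [← ham] using HasOscCells.empty
    obtain ⟨l, hl⟩ := hf.2 m ⟨ham, hmb⟩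
    obtain ⟨δ, hδ, hosc⟩ := exists_dist_le_of_tendsto_nhdsWithin hl hε
    obtain ⟨x, hxA, hx⟩ := exists_lt_of_lt_csSup ⟨a, haA⟩ (max_lt (sub_lt_self m hδ) ham)
    have hnear : ∀ u ∈ Ico x m, u ∈ Iio m ∩ Ioo (m - δ) (m + δ) := fun u hu =>
      ⟨hu.2, by linarith [le_max_left (m - δ) a, hu.1], by linarith [hu.2]⟩
    refine (hxA.2.union (fun u hu v hv => hosc u (hnear u hu) v (hnear v hv))
      fun u hu v hv => hu.2.trans_le hv.1).mono Ico_subset_Ico_union_Ico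
  have hmeq : m = b := by
    by_contra hne
    have hlt : m < b := lt_of_le_of_ne hmb hne
    obtain ⟨δ, hδ, hosc⟩ :=
      exists_dist_le_of_tendsto_nhdsWithin (continuousWithinAt_Ioi_iff_Ici.1 (hf.1 m ⟨ham, hlt⟩)) hε
    set y := min (m + δ / 2) b
    have hmy : m < y := lt_min (by linarith) hlt
    have hnear : ∀ u ∈ Ico m y, u ∈ Ici m ∩ Ioo (m - δ) (m + δ) := fun u hu =>
      ⟨hu.1, by linarith [hu.1], by linarith [hu.2, min_le_left (m + δ / 2) b]⟩
    have hyA : y ∈ A := ⟨⟨ham.trans hmy.le, min_le_right _ _⟩,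
      (hm.union (fun u hu v hv => hosc u (hnear u hu) v (hnear v hv))
        fun u hu v hv => hu.2.trans_le hv.1).mono Ico_subset_Ico_union_Ico⟩
    exact (le_csSup hbdd hyA).not_gt hmy
  exact hmeq ▸ hm

lemma hasOscCells_Icc (hf : Cadlag f a b) (hε : 0 < ε) : HasOscCells f ε (Icc a b) := by
  rcases lt_or_ge b a with hba | hab
  · simpa [Icc_eq_empty_of_lt hba] using HasOscCells.empty
  rw [← Ico_union_right hab]
  exact (hf.hasOscCells_Ico hab hε).union (by simp [hε.le]) fun x hx y hy => hy ▸ hx.2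

end Cadlag

lemma IsPart.mem_Icc_s14 {a b : ℝ} {n : ℕ} {t : ℕ → ℝ} (ht : IsPart a b n t) {i : ℕ} (hi : i ≤ n) :
    t i ∈ Icc a b := by
  obtain ⟨ha, hb, hlt⟩ := ht
  have hmono : MonotoneOn t (Iic n) := (strictMonoOn_Iic_of_lt_succ fun m hm => hlt m hm).monotoneOn
  exact ⟨ha.trans (hmono (Nat.zero_le n) hi (Nat.zero_le i)), (hmono hi (mem_Iic.2 le_rfl) hi).trans hb⟩

lemma card_filter_ne_succ_add_le {u : ℕ → ℕ} {n : ℕ} (hu : ∀ i < n, u i ≤ u (i + 1)) :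
    #{i ∈ Finset.range n | u i ≠ u (i + 1)} + u 0 ≤ u n := by
  induction n with
  | zero => simp
  | succ n ih =>
    have ih := ih fun i hi => hu i (by omega)
    have hn := hu n (by omega)
    rw [Finset.range_add_one, Finset.filter_insert]
    split_ifs with hne
    · rw [Finset.card_insert_of_notMem (by simp)]
      omega
    · omega

/-- Only the increments between different cells survive the truncation at level `c`, and there are
fewer of them than cells. -/
lemma utvc_ne_top_of_hasOscCells {f : ℝ → ℝ} {c a b : ℝ} (h : HasOscCells f c (Icc a b)) :
    UTVc f c a b ≠ ⊤ := by
  obtain ⟨C, hC⟩ := Metric.isBounded_iff.1 h.isBounded_image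
  obtain ⟨k, g, hmono, hlt, hosc⟩ := h
  refine ne_top_of_le_ne_top (b := k * ENNReal.ofReal (C - c)) (by finiteness) ?_
  refine iSup_le fun n => iSup_le fun t => iSup_le fun ht => ?_
  have hmem := fun i (hi : i ≤ n) => ht.mem_Icc_s14 hi
  have hincr : ∀ i < n, f (t (i + 1)) - f (t i) ≤ dist (f (t (i + 1))) (f (t i)) := fun i _ =>
    (Real.dist_eq _ _).symm ▸ le_abs_self _
  calc ∑ i ∈ Finset.range n, ENNReal.ofReal (f (t (i + 1)) - f (t i) - c)
      ≤ ∑ i ∈ Finset.range n, if g (t i) ≠ g (t (i + 1)) then ENNReal.ofReal (C - c) else 0 := by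
        refine Finset.sum_le_sum fun i hi => ?_
        have hi : i < n := Finset.mem_range.1 hi
        split_ifs with hne
        · refine ENNReal.ofReal_le_ofReal (sub_le_sub_right ((hincr i hi).trans ?_) c)
          exact hC (mem_image_of_mem f (hmem _ hi)) (mem_image_of_mem f (hmem _ hi.le))
        · refine (ENNReal.ofReal_eq_zero.2 (sub_nonpos.2 ((hincr i hi).trans ?_))).le
          exact hosc _ (hmem _ hi) _ (hmem _ hi.le) (not_not.1 hne).symm
    _ = #{i ∈ Finset.range n | g (t i) ≠ g (t (i + 1))} * ENNReal.ofReal (C - c) := by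
        rw [← Finset.sum_filter, Finset.sum_const, nsmul_eq_mul]
    _ ≤ k * ENNReal.ofReal (C - c) := by
        gcongr
        have hcount := card_filter_ne_succ_add_le (u := fun i => g (t i)) fun i hi =>
          hmono (hmem i hi.le) (hmem (i + 1) hi) (ht.2.2 i hi).le
        have := hlt _ (hmem n le_rfl)
        omega

lemma utvc_antitone (f : ℝ → ℝ) (a b : ℝ) : Antitone fun c => UTVc f c a b :=
  fun _ _ hcd => iSup_mono fun _ => iSup_mono fun _ => iSup_mono fun _ =>
    Finset.sum_le_sum fun _ _ => ENNReal.ofReal_le_ofReal (by linarith)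

lemma ofReal_sub_add_le {d x y θ μ : ℝ} (hθ : 0 ≤ θ) (hμ : 0 ≤ μ) (hθμ : θ + μ = 1) :
    ENNReal.ofReal (d - (θ * x + μ * y)) ≤
      ENNReal.ofReal θ * ENNReal.ofReal (d - x) + ENNReal.ofReal μ * ENNReal.ofReal (d - y) := by
  have hsplit : d - (θ * x + μ * y) = θ * (d - x) + μ * (d - y) := by
    linear_combination -d * hθμ
  rw [hsplit, ← ENNReal.ofReal_mul hθ, ← ENNReal.ofReal_mul hμ]
  exact ENNReal.ofReal_add_le

lemma utvc_convex_combination_le (f : ℝ → ℝ) (a b : ℝ) {x y θ μ : ℝ} (hθ : 0 ≤ θ) (hμ : 0 ≤ μ)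
    (hθμ : θ + μ = 1) :
    UTVc f (θ * x + μ * y) a b ≤
      ENNReal.ofReal θ * UTVc f x a b + ENNReal.ofReal μ * UTVc f y a b := by
  refine iSup_le fun n => iSup_le fun t => iSup_le fun ht => ?_
  have hle (c : ℝ) : ∑ i ∈ Finset.range n, ENNReal.ofReal (f (t (i + 1)) - f (t i) - c) ≤
      UTVc f c a b := le_iSup_of_le n (le_iSup_of_le t (le_iSup_of_le ht le_rfl))
  calc ∑ i ∈ Finset.range n, ENNReal.ofReal (f (t (i + 1)) - f (t i) - (θ * x + μ * y))
      ≤ ∑ i ∈ Finset.range n,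
          (ENNReal.ofReal θ * ENNReal.ofReal (f (t (i + 1)) - f (t i) - x) +
           ENNReal.ofReal μ * ENNReal.ofReal (f (t (i + 1)) - f (t i) - y)) :=
        Finset.sum_le_sum fun i _ => ofReal_sub_add_le hθ hμ hθμ
    _ = ENNReal.ofReal θ * ∑ i ∈ Finset.range n, ENNReal.ofReal (f (t (i + 1)) - f (t i) - x) +
        ENNReal.ofReal μ * ∑ i ∈ Finset.range n, ENNReal.ofReal (f (t (i + 1)) - f (t i) - y) := by
        rw [Finset.sum_add_distrib, Finset.mul_sum, Finset.mul_sum]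
    _ ≤ ENNReal.ofReal θ * UTVc f x a b + ENNReal.ofReal μ * UTVc f y a b := by
        gcongr <;> exact hle _

lemma convexOn_toReal_of_ne_top {s : Set ℝ} (hs : Convex ℝ s) {F : ℝ → ENNReal}
    (hF : ∀ x ∈ s, F x ≠ ⊤)
    (hconv : ∀ x ∈ s, ∀ y ∈ s, ∀ θ μ : ℝ, 0 ≤ θ → 0 ≤ μ → θ + μ = 1 →
      F (θ * x + μ * y) ≤ ENNReal.ofReal θ * F x + ENNReal.ofReal μ * F y) :
    ConvexOn ℝ s fun x => (F x).toReal := by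
  refine ⟨hs, fun x hx y hy θ μ hθ hμ hθμ => ?_⟩
  have hθx : ENNReal.ofReal θ * F x ≠ ⊤ := ENNReal.mul_ne_top ENNReal.ofReal_ne_top (hF x hx)
  have hμy : ENNReal.ofReal μ * F y ≠ ⊤ := ENNReal.mul_ne_top ENNReal.ofReal_ne_top (hF y hy)
  calc (F (θ * x + μ * y)).toReal
      ≤ (ENNReal.ofReal θ * F x + ENNReal.ofReal μ * F y).toReal :=
        ENNReal.toReal_mono (ENNReal.add_ne_top.2 ⟨hθx, hμy⟩) (hconv x hx y hy θ μ hθ hμ hθμ)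
    _ = θ * (F x).toReal + μ * (F y).toReal := by
        rw [ENNReal.toReal_add hθx hμy, ENNReal.toReal_mul, ENNReal.toReal_mul,
          ENNReal.toReal_ofReal hθ, ENNReal.toReal_ofReal hμ]

theorem utvc_antitone_convex_general (a b : ℝ) (f : ℝ → ℝ)
    (hf : Cadlag f a b) :
    AntitoneOn (fun c => (UTVc f c a b).toReal) (Set.Ioi (0 : ℝ)) ∧
    ConvexOn ℝ (Set.Ioi (0 : ℝ)) (fun c => (UTVc f c a b).toReal) ∧
    ContinuousOn (fun c => (UTVc f c a b).toReal) (Set.Ioi (0 : ℝ)) := by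
  have hfin : ∀ c ∈ Ioi (0 : ℝ), UTVc f c a b ≠ ⊤ := fun _ hc =>
    utvc_ne_top_of_hasOscCells (hf.hasOscCells_Icc hc)
  have hconv : ConvexOn ℝ (Ioi (0 : ℝ)) fun c => (UTVc f c a b).toReal :=
    convexOn_toReal_of_ne_top (convex_Ioi 0) hfin
      fun _ _ _ _ _ _ hθ hμ hθμ => utvc_convex_combination_le f a b hθ hμ hθμ
  exact ⟨fun c hc _ _ hcd => ENNReal.toReal_mono (hfin c hc) (utvc_antitone f a b hcd), hconv,
    hconv.continuousOn isOpen_Ioi⟩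

/-- `c ↦ UTV^c(f,[a,b])` is non-increasing and convex on `(0, ∞)`,
hence continuous. -/
theorem utvc_antitone_convex (a b : ℝ) (hab : a < b) (f : ℝ → ℝ)
    (hf : Cadlag f a b) :
    AntitoneOn (fun c => (UTVc f c a b).toReal) (Set.Ioi (0 : ℝ)) ∧
    ConvexOn ℝ (Set.Ioi (0 : ℝ)) (fun c => (UTVc f c a b).toReal) ∧
    ContinuousOn (fun c => (UTVc f c a b).toReal) (Set.Ioi (0 : ℝ)) :=
  utvc_antitone_convex_general a b f hf
end
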